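/- C(0) equals the ℂ-linear span of the following n² elements of ⨁_{b∈ℤ/nℤ} gl_n(ℂ), and these n² elements are linearly independent: for 1 ≤ i ≤ n, the tuple all of whose components are E_{i,i}; for 1 ≤ i < j ≤ n, the tuple whose b-th component is 0 for i ≤ b ≤ j−1 and E_{i,j} for the other b ∈ {0,…,n−1}; and for 1 ≤ i < j ≤ n, the tuple whose b-th component is E_{j,i} for i ≤ b ≤ j−1 and 0 for the other b. -/

import Mathlib

/-!
The relation `A_{b+1} D_b(0) = D_b(0) A_b` acts entry by entry: the sequence `b ↦ (A_b)_{pq}`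
is unchanged by the step `b → b + 1` unless `b ∈ {p, q}`, and for `p ≠ q` it must vanish at
`b = q` and at `b = p + 1`. Walking once around `ℤ/nℤ` shows that it is a constant on the cyclic
interval `(q, p]` and zero on its complement. Hence `C(0)` has the basis consisting of the
indicators of these intervals placed at entry `(p, q)`, and these are exactly the `n²` listed
generators.
-/

/-- The diagonal matrix `D_b(0)` over `ℂ` whose `(b+1,b+1)` entry (1-based), i.e. `(b,b)`
entry (0-based), is `0` and whose other diagonal entries are `1`. -/
def Dmat0 (n : ℕ) (b : Fin n) : Matrix (Fin n) (Fin n) ℂ :=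
  Matrix.diagonal (fun i => if i = b then 0 else 1)

/-- `C(0)`: tuples `(A_b)_{b ∈ ℤ/nℤ}` of complex `n×n` matrices with
`A_{b+1} D_b(0) = D_b(0) A_b` for all `b`. -/
def Cset0 (n : ℕ) [NeZero n] : Set (Fin n → Matrix (Fin n) (Fin n) ℂ) :=
  {A | ∀ b : Fin n, A (b + 1) * Dmat0 n b = Dmat0 n b * A b}

/-- Index type for the `n²` generators: `n` diagonal ones, and an upper and a lower one
for each pair `i < j`. -/
abbrev GenIdx (n : ℕ) : Type :=
  Fin n ⊕ ({p : Fin n × Fin n // p.1 < p.2} ⊕ {p : Fin n × Fin n // p.1 < p.2})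

/-- The `n²` elements of `⨁_{b ∈ ℤ/nℤ} gl_n(ℂ)`.  Indices are 0-based: the 1-based
condition `i ≤ b ≤ j-1` for `1 ≤ i < j ≤ n`, `b ∈ {0,…,n-1}` reads `i < b ∧ b ≤ j` in
0-based row/column indices `i < j`. -/
def gen0 (n : ℕ) : GenIdx n → (Fin n → Matrix (Fin n) (Fin n) ℂ)
  | Sum.inl i => fun _ => Matrix.single i i 1
  | Sum.inr (Sum.inl ⟨(i, j), _⟩) => fun b =>
      if i.val < b.val ∧ b.val ≤ j.val then 0 else Matrix.single i j 1
  | Sum.inr (Sum.inr ⟨(i, j), _⟩) => fun b =>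
      if i.val < b.val ∧ b.val ≤ j.val then Matrix.single j i 1 else 0

open Fin.NatCast

namespace Fin

variable {n : ℕ}

lemma val_sub_eq_ite (a b : Fin n) :
    (a - b).val = if b ≤ a then a.val - b.val else n + a.val - b.val := by
  split_ifs with h
  · exact coe_sub_iff_le.2 h
  · exact coe_sub_iff_lt.2 (not_le.1 h)

variable [NeZero n]

lemma val_add_one_eq_ite (a : Fin n) :
    (a + 1).val = if a.val + 1 < n then a.val + 1 else 0 := by
  rw [val_add, val_one', Nat.add_mod_mod]
  split_ifs with h
  · exact Nat.mod_eq_of_lt h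
  · rw [show a.val + 1 = n by omega, Nat.mod_self]

lemma val_neg_one : (-1 : Fin n).val = n - 1 := by
  have h := val_add_one_eq_ite (-1 : Fin n)
  rw [neg_add_cancel, val_zero] at h
  split_ifs at h
  omega

lemma val_add_natCast_sub (s : Fin n) {t : ℕ} (ht : t < n) : (s + t - s).val = t := by
  rw [add_sub_cancel_left, val_cast_of_lt ht]

/-- The cyclic interval `(q, p]` of `ℤ/nℤ`; for `p = q` it is all of `ℤ/nℤ`. -/
def cyclicIoc (q p : Fin n) : Set (Fin n) := {b | (b - (q + 1)).val ≤ (p - (q + 1)).val}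

instance (q p : Fin n) : DecidablePred (· ∈ cyclicIoc q p) := fun b =>
  inferInstanceAs (Decidable ((b - (q + 1)).val ≤ (p - (q + 1)).val))

variable {b p q : Fin n}

lemma right_mem_cyclicIoc : p ∈ cyclicIoc q p := le_refl (p - (q + 1)).val

lemma mem_cyclicIoc_self : b ∈ cyclicIoc q q := by
  simp only [cyclicIoc, Set.mem_ofPred_eq, sub_add_cancel_left, val_neg_one]
  omega

lemma mem_cyclicIoc_iff_of_lt (h : q < p) :
    b ∈ cyclicIoc q p ↔ q.val < b.val ∧ b.val ≤ p.val := by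
  simp only [cyclicIoc, Set.mem_ofPred_eq, val_sub_eq_ite, val_add_one_eq_ite, le_iff_val_le_val]
  have := b.isLt; have := p.isLt; have : q.val < p.val := h
  split_ifs <;> omega

lemma mem_cyclicIoc_iff_of_gt (h : p < q) :
    b ∈ cyclicIoc q p ↔ ¬(p.val < b.val ∧ b.val ≤ q.val) := by
  simp only [cyclicIoc, Set.mem_ofPred_eq, val_sub_eq_ite, val_add_one_eq_ite, le_iff_val_le_val]
  have := b.isLt; have := q.isLt; have : p.val < q.val := h
  split_ifs <;> omega

lemma left_notMem_cyclicIoc (h : p ≠ q) : q ∉ cyclicIoc q p := by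
  simp only [cyclicIoc, Set.mem_ofPred_eq, val_sub_eq_ite, val_add_one_eq_ite, le_iff_val_le_val]
  rw [Ne, Fin.ext_iff] at h
  have := q.isLt; have := p.isLt
  split_ifs <;> omega

lemma add_one_notMem_cyclicIoc (h : p ≠ q) : p + 1 ∉ cyclicIoc q p := by
  simp only [cyclicIoc, Set.mem_ofPred_eq, val_sub_eq_ite, val_add_one_eq_ite, le_iff_val_le_val]
  rw [Ne, Fin.ext_iff] at h
  have := q.isLt; have := p.isLt
  split_ifs <;> omega

lemma add_one_mem_cyclicIoc_iff (hp : b ≠ p) (hq : b ≠ q) :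
    b + 1 ∈ cyclicIoc q p ↔ b ∈ cyclicIoc q p := by
  simp only [cyclicIoc, Set.mem_ofPred_eq, val_sub_eq_ite, val_add_one_eq_ite, le_iff_val_le_val]
  rw [Ne, Fin.ext_iff] at hp hq
  have := b.isLt; have := q.isLt; have := p.isLt
  split_ifs <;> omega

end Fin

lemma Nat.apply_eq_of_forall_succ_eq {α : Type*} {g : ℕ → α} {a c : ℕ}
    (h : ∀ t, a ≤ t → t < c → g (t + 1) = g t) {t : ℕ} (hat : a ≤ t) (htc : t ≤ c) :
    g t = g a := by
  induction t, hat using Nat.le_induction with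
  | base => rfl
  | succ t hat ih => rw [h t hat htc, ih (by omega)]

section CyclicRecurrence

variable {n : ℕ} [NeZero n] {M : Type*}

open Fin

theorem eq_ite_mem_cyclicIoc [Zero M] {f : Fin n → M} {p q : Fin n}
    (hstep : ∀ b, b ≠ p → b ≠ q → f (b + 1) = f b) (hzero : p ≠ q → f (p + 1) = 0)
    (b : Fin n) : f b = if b ∈ cyclicIoc q p then f p else 0 := by
  set s := q + 1
  set d := (p - s).val
  -- `t ↦ f (s + t)`, `t < n`, walks once around the circle from `s = q + 1` to `s + (n - 1) = q`
  have hwalk : ∀ t, t + 1 < n → t ≠ d → f (s + (t + 1 : ℕ)) = f (s + t) := by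
    intro t ht htd
    rw [Nat.cast_succ, ← add_assoc]
    refine hstep _ (fun hp => htd ?_) (fun hq => ?_)
    · have h := val_add_natCast_sub s (t := t) (by omega)
      rw [hp] at h
      exact h.symm
    · have h := val_add_natCast_sub s (t := t) (by omega)
      rw [hq, sub_add_cancel_left, val_neg_one] at h
      omega
  have hd : d < n := (p - s).isLt
  have hsd : s + (d : Fin n) = p := by rw [cast_val_eq_self, add_sub_cancel]
  have hb : s + ((b - s).val : Fin n) = b := by rw [cast_val_eq_self, add_sub_cancel]
  have hbn : (b - s).val < n := (b - s).isLt
  split_ifs with hmem <;> rw [← hb]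
  · change (b - s).val ≤ d at hmem
    have hconst : ∀ t ≤ d, f (s + t) = f (s + (0 : ℕ)) := fun t htd =>
      Nat.apply_eq_of_forall_succ_eq (g := fun t : ℕ => f (s + t))
        (fun t _ ht => hwalk t (by omega) (by omega)) (Nat.zero_le t) htd
    rw [← hsd, hconst _ le_rfl, hconst _ hmem]
  · change ¬(b - s).val ≤ d at hmem
    have hpq : p ≠ q := by
      rintro rfl
      have : d = n - 1 := by simp only [d, s, sub_add_cancel_left, val_neg_one]
      omega
    have hzero' : f (s + (d + 1 : ℕ)) = 0 := by rw [Nat.cast_succ, ← add_assoc, hsd, hzero hpq]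
    rw [← hzero']
    exact Nat.apply_eq_of_forall_succ_eq (g := fun t : ℕ => f (s + t))
      (fun t ht ht' => hwalk t (by omega) (by omega)) (by omega) le_rfl

theorem ite_mem_cyclicIoc_recurrence [MulZeroOneClass M] (x : M) (p q b : Fin n) :
    (if b + 1 ∈ cyclicIoc q p then x else 0) * (if q = b then 0 else 1) =
      (if p = b then 0 else 1) * (if b ∈ cyclicIoc q p then x else 0) := by
  by_cases hp : p = b <;> by_cases hq : q = b
  · simp [hp, hq]
  · subst hp
    simp [hq, add_one_notMem_cyclicIoc (Ne.symm hq)]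
  · subst hq
    simp [hp, left_notMem_cyclicIoc hp]
  · simp [hp, hq, add_one_mem_cyclicIoc_iff (Ne.symm hp) (Ne.symm hq)]

end CyclicRecurrence

section
variable {n : ℕ}

def GenIdx.entry : GenIdx n → Fin n × Fin n
  | .inl i => (i, i)
  | .inr (.inl ⟨(i, j), _⟩) => (i, j)
  | .inr (.inr ⟨(i, j), _⟩) => (j, i)

lemma GenIdx.entry_bijective : Function.Bijective (GenIdx.entry (n := n)) := by
  refine ⟨?_, fun ⟨p, q⟩ => ?_⟩
  · rintro (i | ⟨⟨i, j⟩, hij⟩ | ⟨⟨i, j⟩, hij⟩)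
      (i' | ⟨⟨i', j'⟩, hij'⟩ | ⟨⟨i', j'⟩, hij'⟩) h <;>
      simp only [GenIdx.entry, Prod.mk.injEq] at h <;> grind
  · rcases lt_trichotomy p q with h | rfl | h
    · exact ⟨.inr (.inl ⟨(p, q), h⟩), rfl⟩
    · exact ⟨.inl p, rfl⟩
    · exact ⟨.inr (.inr ⟨(q, p), h⟩), rfl⟩

end

section
variable {n : ℕ} [NeZero n]
open Fin

lemma mem_Cset0_iff {A : Fin n → Matrix (Fin n) (Fin n) ℂ} :
    A ∈ Cset0 n ↔ ∀ b p q, A (b + 1) p q * (if q = b then 0 else 1) =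
      (if p = b then 0 else 1) * A b p q := by
  simp [Cset0, Dmat0, Matrix.mul_diagonal, Matrix.diagonal_mul, ← Matrix.ext_iff]

theorem apply_eq_of_mem_Cset0 {A : Fin n → Matrix (Fin n) (Fin n) ℂ} (hA : A ∈ Cset0 n)
    (b p q : Fin n) : A b p q = if b ∈ cyclicIoc q p then A p p q else 0 := by
  rw [mem_Cset0_iff] at hA
  refine eq_ite_mem_cyclicIoc (f := fun b => A b p q) (fun b hp hq => ?_) (fun hpq => ?_) b
  · simpa [Ne.symm hp, Ne.symm hq] using hA b p q
  · simpa [Ne.symm hpq] using hA p p q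

def cset0Submodule (n : ℕ) [NeZero n] : Submodule ℂ (Fin n → Matrix (Fin n) (Fin n) ℂ) where
  carrier := Cset0 n
  add_mem' ha hb b := by simp [add_mul, mul_add, ha b, hb b]
  zero_mem' b := by simp
  smul_mem' r a ha b := by simp [ha b]

def cyclicGen (e : Fin n × Fin n) : Fin n → Matrix (Fin n) (Fin n) ℂ := fun b =>
  Matrix.single e.1 e.2 (if b ∈ cyclicIoc e.2 e.1 then 1 else 0)

lemma cyclicGen_apply (e : Fin n × Fin n) (b p q : Fin n) :
    cyclicGen e b p q = if e = (p, q) then (if b ∈ cyclicIoc q p then 1 else 0) else 0 := by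
  obtain ⟨p', q'⟩ := e
  by_cases h : p' = p ∧ q' = q
  · obtain ⟨rfl, rfl⟩ := h
    simp [cyclicGen]
  · simp [cyclicGen, h]

lemma sum_smul_cyclicGen_apply (c : Fin n × Fin n → ℂ) (b p q : Fin n) :
    (∑ e, c e • cyclicGen e) b p q = if b ∈ cyclicIoc q p then c (p, q) else 0 := by
  simp [Finset.sum_apply, Matrix.sum_apply, cyclicGen_apply]

theorem cyclicGen_mem_Cset0 (e : Fin n × Fin n) : cyclicGen e ∈ Cset0 n := by
  refine mem_Cset0_iff.2 fun b p q => ?_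
  by_cases he : e = (p, q)
  · subst he
    simpa only [cyclicGen_apply, if_true] using ite_mem_cyclicIoc_recurrence (1 : ℂ) p q b
  · simp [cyclicGen_apply, he]

theorem Cset0_eq_span_cyclicGen :
    Cset0 n = (Submodule.span ℂ (Set.range (cyclicGen (n := n))) : Set _) := by
  refine Set.Subset.antisymm (fun A hA => ?_) ?_
  · have hA' : A = ∑ e, A e.1 e.1 e.2 • cyclicGen e := by
      ext b p q
      rw [sum_smul_cyclicGen_apply, apply_eq_of_mem_Cset0 hA]
    rw [hA']
    exact Submodule.sum_mem _ fun e _ => Submodule.smul_mem _ _ (Submodule.subset_span ⟨e, rfl⟩)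
  · refine (Submodule.span_le (p := cset0Submodule n)).2 ?_
    exact Set.range_subset_iff.2 cyclicGen_mem_Cset0

theorem linearIndependent_cyclicGen : LinearIndependent ℂ (cyclicGen (n := n)) := by
  refine Fintype.linearIndependent_iff.2 fun c hc e => ?_
  have h := congrArg (fun A => A e.1 e.1 e.2) hc
  simp only [sum_smul_cyclicGen_apply, if_pos right_mem_cyclicIoc] at h
  simpa using h

lemma gen0_eq_cyclicGen_comp : gen0 n = cyclicGen ∘ GenIdx.entry := by
  funext k b
  rcases k with i | ⟨⟨i, j⟩, hij⟩ | ⟨⟨i, j⟩, hij⟩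
  · simp [gen0, cyclicGen, GenIdx.entry, mem_cyclicIoc_self]
  · simp only [Function.comp_apply, gen0, cyclicGen, GenIdx.entry, mem_cyclicIoc_iff_of_gt hij]
    split_ifs <;> simp
  · simp only [Function.comp_apply, gen0, cyclicGen, GenIdx.entry, mem_cyclicIoc_iff_of_lt hij]
    split_ifs <;> simp

end

theorem statement9_general (n : ℕ) [NeZero n] :
    (Cset0 n = (Submodule.span ℂ (Set.range (gen0 n)) :
      Set (Fin n → Matrix (Fin n) (Fin n) ℂ))) ∧
    LinearIndependent ℂ (gen0 n) := by
  obtain ⟨hinj, hsurj⟩ := GenIdx.entry_bijective (n := n)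
  rw [gen0_eq_cyclicGen_comp, hsurj.range_comp]
  exact ⟨Cset0_eq_span_cyclicGen, linearIndependent_cyclicGen.comp _ hinj⟩

/-- `C(0)` equals the ℂ-linear span of the `n²` elements `gen0 n`, and
these elements are linearly independent over `ℂ`. -/
theorem statement9 (n : ℕ) [NeZero n] (hn : 2 ≤ n) :
    (Cset0 n = (Submodule.span ℂ (Set.range (gen0 n)) :
      Set (Fin n → Matrix (Fin n) (Fin n) ℂ))) ∧
    LinearIndependent ℂ (gen0 n) :=
  statement9_general n
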